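/- Let p > 0 and q ∈ ℝ. Any two 4×4 real skew-symmetric matrices A, B with Pf(A) = Pf(B) = p, s(A) = s(B) = q, and neither equal to √p·J nor -√p·J, are symplectically congruent: there exists P with Pᵀ J P = J and Pᵀ A P = B. -/

import Mathlib

open Matrix

/-- The standard 4×4 symplectic matrix. -/
def J4 : Matrix (Fin 4) (Fin 4) ℝ :=
  !![0, 1, 0, 0; -1, 0, 0, 0; 0, 0, 0, 1; 0, 0, -1, 0]

/-- Pfaffian of a 4×4 skew-symmetric matrix: `af - be + cd`. -/
def pf4 (A : Matrix (Fin 4) (Fin 4) ℝ) : ℝ :=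
  A 0 1 * A 2 3 - A 0 2 * A 1 3 + A 0 3 * A 1 2

/-- Sum function of a 4×4 skew-symmetric matrix: `a + f`. -/
def s4 (A : Matrix (Fin 4) (Fin 4) ℝ) : ℝ :=
  A 0 1 + A 2 3

/-!
Let `M := -(J4 * A)`, so that `A = J4 * M`, `M` is self-adjoint for `ω(u, v) = uᵀ J4 v`, and
`M² = s(A) M - Pf(A)`. If `A` is not a multiple of `J4`, some `x, z` have `ω(x, z) = 0 ≠ xᵀ A z`;
then `y := (xᵀ A z)⁻¹ (M z - s(A) z)` satisfies `ω(x, y) = 1`, `ω(x, M y) = 0`, and the Gram matrices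
of `J4` and `A` on `(x, M x, y, M y)` depend only on `Pf(A)` and `s(A)`. The first one has
determinant `Pf(A)² ≠ 0`, so these vectors form a basis, and changing from the basis built for `B`
to the one built for `A` is the required symplectic congruence.
-/

section Gram

variable {n R : Type*} [Fintype n] [CommRing R]

theorem of_mul_mul_transpose_of {ι : Type*} (S : Matrix n n R) (v : ι → n → R) :
    of v * S * (of v)ᵀ = of fun i j => v i ⬝ᵥ S *ᵥ v j := by
  ext i j
  simp only [mul_apply, dotProduct, mulVec, of_apply, transpose_apply, Finset.mul_sum,
    Finset.sum_mul]
  rw [Finset.sum_comm]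
  exact Finset.sum_congr rfl fun _ _ => Finset.sum_congr rfl fun _ _ => by ring

theorem dotProduct_mulVec_self_eq_zero [NoZeroDivisors R] [CharZero R] {S : Matrix n n R}
    (hS : Sᵀ = -S) (u : n → R) : u ⬝ᵥ S *ᵥ u = 0 := by
  have h : (Sᵀ *ᵥ u) ⬝ᵥ u = u ⬝ᵥ S *ᵥ u := by rw [mulVec_transpose, dotProduct_mulVec]
  rwa [hS, neg_mulVec, neg_dotProduct, dotProduct_comm, neg_eq_iff_add_eq_zero,
    add_self_eq_zero] at h

theorem dotProduct_mulVec_eq_neg_swap {W : Matrix n n R} (hW : ∀ u, u ⬝ᵥ W *ᵥ u = 0)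
    (u v : n → R) : u ⬝ᵥ W *ᵥ v = -(v ⬝ᵥ W *ᵥ u) := by
  have h := hW (u + v)
  simp only [mulVec_add, dotProduct_add, add_dotProduct, hW] at h
  linear_combination h

theorem mulVec_dotProduct_mulVec_eq {W M : Matrix n n R} (hW : ∀ u, u ⬝ᵥ W *ᵥ u = 0)
    (hWM : ∀ u, u ⬝ᵥ (W * M) *ᵥ u = 0) (u v : n → R) :
    (M *ᵥ u) ⬝ᵥ W *ᵥ v = u ⬝ᵥ W *ᵥ (M *ᵥ v) := by
  have h := dotProduct_mulVec_eq_neg_swap hWM u v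
  rw [← mulVec_mulVec, ← mulVec_mulVec, dotProduct_mulVec_eq_neg_swap hW v] at h
  linear_combination -h

theorem mulVec_mulVec_of_mul_self_eq [DecidableEq n] {M : Matrix n n R} {p q : R}
    (hM : M * M = q • M - p • 1) (v : n → R) :
    M *ᵥ (M *ᵥ v) = q • M *ᵥ v - p • v := by
  rw [mulVec_mulVec, hM, sub_mulVec, smul_mulVec, smul_mulVec, one_mulVec]

/- The Gram matrices of `W` and `W * M` on `(x, M x, y, M y)` when `x ⬝ W y = 1`,
`x ⬝ (W * M) y = 0` and `M * M = q • M - p • 1` (see `gram_adaptedBasis`). -/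
def gramJ (p : R) : Matrix (Fin 4) (Fin 4) R :=
  !![0, 0, 1, 0; 0, 0, 0, -p; -1, 0, 0, 0; 0, p, 0, 0]

def gramA (p q : R) : Matrix (Fin 4) (Fin 4) R :=
  !![0, 0, 0, -p; 0, 0, -p, -(q * p); 0, p, 0, 0; p, q * p, 0, 0]

theorem det_gramJ (p : R) : (gramJ p).det = p ^ 2 := by
  simp [gramJ, det_succ_row_zero, Fin.sum_univ_succ, Fin.succAbove, sq]

theorem gram_adaptedBasis [DecidableEq n] {W M : Matrix n n R} {p q : R}
    (hW : ∀ u, u ⬝ᵥ W *ᵥ u = 0) (hWM : ∀ u, u ⬝ᵥ (W * M) *ᵥ u = 0)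
    (hM : M * M = q • M - p • 1) {x y : n → R}
    (hxy : x ⬝ᵥ W *ᵥ y = 1) (hxMy : x ⬝ᵥ W *ᵥ (M *ᵥ y) = 0) :
    of ![x, M *ᵥ x, y, M *ᵥ y] * W * (of ![x, M *ᵥ x, y, M *ᵥ y])ᵀ = gramJ p ∧
    of ![x, M *ᵥ x, y, M *ᵥ y] * (W * M) * (of ![x, M *ᵥ x, y, M *ᵥ y])ᵀ = gramA p q := by
  have hWM' (u : n → R) : u ⬝ᵥ W *ᵥ (M *ᵥ u) = 0 := by rw [mulVec_mulVec]; exact hWM u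
  have hyx : y ⬝ᵥ W *ᵥ x = -1 := by rw [dotProduct_mulVec_eq_neg_swap hW, hxy]
  have hyMx : y ⬝ᵥ W *ᵥ (M *ᵥ x) = 0 := by
    rw [dotProduct_mulVec_eq_neg_swap hW, mulVec_dotProduct_mulVec_eq hW hWM, hxMy, neg_zero]
  rw [of_mul_mul_transpose_of, of_mul_mul_transpose_of]
  constructor <;> ext i j <;> fin_cases i <;> fin_cases j <;>
    simp [gramJ, gramA, ← mulVec_mulVec, mulVec_mulVec_of_mul_self_eq hM, hW, hWM',
      mulVec_dotProduct_mulVec_eq hW hWM, hxy, hxMy, hyx, hyMx, mulVec_sub, mulVec_smul]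

theorem exists_transpose_mul_mul_eq_gramJ_gramA {K : Type*} [Field K] [DecidableEq n]
    {W M : Matrix n n K} {p q : K} (hW : ∀ u, u ⬝ᵥ W *ᵥ u = 0)
    (hWM : ∀ u, u ⬝ᵥ (W * M) *ᵥ u = 0) (hM : M * M = q • M - p • 1) {x z : n → K}
    (hxz : x ⬝ᵥ W *ᵥ z = 0) (ha : x ⬝ᵥ (W * M) *ᵥ z ≠ 0) :
    ∃ Q : Matrix n (Fin 4) K, Qᵀ * W * Q = gramJ p ∧ Qᵀ * (W * M) * Q = gramA p q := by
  set a := x ⬝ᵥ (W * M) *ᵥ z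
  have hxMz : x ⬝ᵥ W *ᵥ (M *ᵥ z) = a := by rw [mulVec_mulVec]
  have hxy : x ⬝ᵥ W *ᵥ (a⁻¹ • (M *ᵥ z - q • z)) = 1 := by
    rw [mulVec_smul, mulVec_sub, mulVec_smul, dotProduct_smul, dotProduct_sub,
      dotProduct_smul, hxMz, hxz, smul_eq_mul, smul_zero, sub_zero, inv_mul_cancel₀ ha]
  have hxMy : x ⬝ᵥ W *ᵥ (M *ᵥ (a⁻¹ • (M *ᵥ z - q • z))) = 0 := by
    simp only [mulVec_smul, mulVec_sub, mulVec_mulVec_of_mul_self_eq hM, dotProduct_smul,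
      dotProduct_sub, hxMz, hxz, smul_eq_mul]
    ring
  exact ⟨(of ![x, M *ᵥ x, _, M *ᵥ _])ᵀ, by
    simpa only [transpose_transpose] using gram_adaptedBasis hW hWM hM hxy hxMy⟩

theorem isUnit_det_of_isUnit_det_transpose_mul_mul [DecidableEq n] {Q S : Matrix n n R}
    (h : IsUnit (Qᵀ * S * Q).det) : IsUnit Q.det := by
  rw [det_mul] at h
  exact isUnit_of_mul_isUnit_right h

theorem transpose_mul_mul_eq_of_congr [DecidableEq n] {Q Q' S S' : Matrix n n R}
    (hQ' : IsUnit Q'.det) (h : Qᵀ * S * Q = Q'ᵀ * S' * Q') :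
    (Q * Q'⁻¹)ᵀ * S * (Q * Q'⁻¹) = S' := by
  have hQ'T : IsUnit Q'ᵀ.det := by rwa [det_transpose]
  calc (Q * Q'⁻¹)ᵀ * S * (Q * Q'⁻¹) = Q'ᵀ⁻¹ * (Qᵀ * S * Q) * Q'⁻¹ := by
        simp only [transpose_mul, transpose_nonsing_inv, Matrix.mul_assoc]
    _ = S' := by
        rw [h]
        simp only [← Matrix.mul_assoc, nonsing_inv_mul _ hQ'T, Matrix.one_mul]
        rw [Matrix.mul_assoc, mul_nonsing_inv _ hQ', Matrix.mul_one]

end Gram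

theorem J4_transpose : J4ᵀ = -J4 := by
  ext i j
  fin_cases i <;> fin_cases j <;> simp [J4]

theorem J4_mul_neg_J4_mul (A : Matrix (Fin 4) (Fin 4) ℝ) : J4 * -(J4 * A) = A := by
  have hJJ : J4 * J4 = -1 := by
    ext i j
    fin_cases i <;> fin_cases j <;> simp [J4, mul_apply, Fin.sum_univ_four, one_apply]
  rw [Matrix.mul_neg, ← Matrix.mul_assoc, hJJ, Matrix.neg_mul, Matrix.one_mul, neg_neg]

theorem pf4_smul_J4 (t : ℝ) : pf4 (t • J4) = t ^ 2 := by
  simp [pf4, J4, sq]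

theorem fin_four_eq_of_transpose_eq_neg {A : Matrix (Fin 4) (Fin 4) ℝ} (hA : Aᵀ = -A) :
    A = !![0, A 0 1, A 0 2, A 0 3; -A 0 1, 0, A 1 2, A 1 3;
      -A 0 2, -A 1 2, 0, A 2 3; -A 0 3, -A 1 3, -A 2 3, 0] := by
  have hs (i j : Fin 4) : A j i = -A i j := by simpa using congrFun (congrFun hA i) j
  have hd (i : Fin 4) : A i i = 0 := by linarith [hs i i]
  ext i j
  fin_cases i <;> fin_cases j <;> simp [hd, hs 0 1, hs 0 2, hs 0 3, hs 1 2, hs 1 3, hs 2 3]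

/-- `-(J4 * A)` has characteristic polynomial `(X² - s4 A • X + pf4 A)²`, and its square root
already annihilates it. -/
theorem neg_J4_mul_mul_self {A : Matrix (Fin 4) (Fin 4) ℝ} (hA : Aᵀ = -A) :
    -(J4 * A) * -(J4 * A) = s4 A • -(J4 * A) - pf4 A • 1 := by
  rw [fin_four_eq_of_transpose_eq_neg hA]
  ext i j
  fin_cases i <;> fin_cases j <;> simp [J4, pf4, s4, mul_apply, Fin.sum_univ_four, one_apply] <;>
    ring

theorem eq_smul_J4_of_forall {A : Matrix (Fin 4) (Fin 4) ℝ} (hA : Aᵀ = -A)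
    (h : ∀ x y, x ⬝ᵥ J4 *ᵥ y = 0 → x ⬝ᵥ A *ᵥ y = 0) : A = A 0 1 • J4 := by
  have hij (i j : Fin 4) (hJ : J4 i j = 0) : A i j = 0 := by
    simpa [mulVec_single_one, single_one_dotProduct] using
      h (Pi.single i 1) (Pi.single j 1) (by simpa [mulVec_single_one, single_one_dotProduct])
  have h02 := hij 0 2 (by simp [J4])
  have h03 := hij 0 3 (by simp [J4])
  have h12 := hij 1 2 (by simp [J4])
  have h13 := hij 1 3 (by simp [J4])
  have h23 : A 2 3 = A 0 1 := by
    have h' : A 0 1 + A 0 2 + A 3 1 + A 3 2 = 0 := by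
      simpa [dotProduct, mulVec, Fin.sum_univ_four, add_assoc] using
        h ![1, 0, 0, 1] ![0, 1, 1, 0] (by simp [J4, dotProduct, mulVec, Fin.sum_univ_four])
    have hs (i j : Fin 4) : A j i = -A i j := by simpa using congrFun (congrFun hA i) j
    linarith [hs 1 3, hs 2 3]
  rw [fin_four_eq_of_transpose_eq_neg hA, h02, h03, h12, h13, h23]
  ext i j
  fin_cases i <;> fin_cases j <;> simp [J4]

theorem forall_ne_smul_J4 {A : Matrix (Fin 4) (Fin 4) ℝ} {p : ℝ} (hpf : pf4 A = p)
    (h : A ≠ Real.sqrt p • J4) (h' : A ≠ -Real.sqrt p • J4) (t : ℝ) : A ≠ t • J4 := by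
  rintro rfl
  rw [← hpf, pf4_smul_J4, Real.sqrt_sq_eq_abs] at h h'
  rcases abs_choice t with ht | ht
  · exact h (by rw [ht])
  · exact h' (by rw [ht, neg_neg])

theorem exists_transpose_mul_mul_eq_gramJ_gramA_of_ne_smul_J4 {A : Matrix (Fin 4) (Fin 4) ℝ}
    (hA : Aᵀ = -A) (hAJ : ∀ t : ℝ, A ≠ t • J4) :
    ∃ Q : Matrix (Fin 4) (Fin 4) ℝ,
      Qᵀ * J4 * Q = gramJ (pf4 A) ∧ Qᵀ * A * Q = gramA (pf4 A) (s4 A) := by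
  obtain ⟨x, z, hxz, ha⟩ : ∃ x z, x ⬝ᵥ J4 *ᵥ z = 0 ∧ x ⬝ᵥ A *ᵥ z ≠ 0 := by
    by_contra! h
    exact hAJ _ (eq_smul_J4_of_forall hA h)
  have hJM := J4_mul_neg_J4_mul A
  have hWM : ∀ u, u ⬝ᵥ (J4 * -(J4 * A)) *ᵥ u = 0 := by
    rw [hJM]
    exact dotProduct_mulVec_self_eq_zero hA
  have hQ := exists_transpose_mul_mul_eq_gramJ_gramA (dotProduct_mulVec_self_eq_zero J4_transpose)
    hWM (neg_J4_mul_mul_self hA) hxz (by rwa [hJM])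
  rwa [hJM] at hQ

theorem orbit_classification_pos (p q : ℝ) (hp : 0 < p)
    (A B : Matrix (Fin 4) (Fin 4) ℝ)
    (hA : Aᵀ = -A) (hB : Bᵀ = -B)
    (hApf : pf4 A = p) (hBpf : pf4 B = p)
    (hAs : s4 A = q) (hBs : s4 B = q)
    (hAJ : A ≠ Real.sqrt p • J4) (hAJ' : A ≠ -(Real.sqrt p) • J4)
    (hBJ : B ≠ Real.sqrt p • J4) (hBJ' : B ≠ -(Real.sqrt p) • J4) :
    ∃ P : Matrix (Fin 4) (Fin 4) ℝ, Pᵀ * J4 * P = J4 ∧ Pᵀ * A * P = B := by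
  obtain ⟨QA, hQAJ, hQAA⟩ :=
    exists_transpose_mul_mul_eq_gramJ_gramA_of_ne_smul_J4 hA (forall_ne_smul_J4 hApf hAJ hAJ')
  obtain ⟨QB, hQBJ, hQBB⟩ :=
    exists_transpose_mul_mul_eq_gramJ_gramA_of_ne_smul_J4 hB (forall_ne_smul_J4 hBpf hBJ hBJ')
  have hQB : IsUnit QB.det := by
    refine isUnit_det_of_isUnit_det_transpose_mul_mul (S := J4) ?_
    rw [hQBJ, det_gramJ, hBpf]
    exact (pow_pos hp 2).ne'.isUnit
  refine ⟨QA * QB⁻¹, transpose_mul_mul_eq_of_congr hQB ?_, transpose_mul_mul_eq_of_congr hQB ?_⟩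
  · rw [hQAJ, hQBJ, hApf, hBpf]
  · rw [hQAA, hQBB, hApf, hBpf, hAs, hBs]
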